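/- arXiv:2512.08151 — 3 statements merged into one kernel-verified Lean document; each statement's English description precedes it below -/
import Mathlib

section
/- Let ⟨·,·⟩ be an Ad-invariant inner product on ℝ^m. Then the normalized transfer θ̲ := (1/#F)·∑_{f∈F} Ad(f) is the orthogonal projection of ℝ^m onto the real linear span of the image θ(Γ) of the transfer homomorphism (with ℤ^m viewed inside ℝ^m): θ̲ ∘ θ̲ = θ̲, ⟨θ̲u, w⟩ = ⟨u, θ̲w⟩ for all u, w ∈ ℝ^m, and the range of θ̲ equals span_ℝ(θ(Γ)). -/
open scoped BigOperators Classical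
open Filter Matrix MeasureTheory

namespace NSVA

noncomputable section

/-- Convolution of two real-valued functions on a group. -/
def conv {G : Type*} [Group G] (μ ν : G → ℝ) : G → ℝ :=
  fun g => ∑' h : G, μ h * ν (h⁻¹ * g)

/-- Convolution powers: `convPow μ 0 = δ_1`, `convPow μ (n+1) = (convPow μ n) * μ`. -/
def convPow {G : Type*} [Group G] (μ : G → ℝ) : ℕ → G → ℝ
  | 0 => fun g => if g = 1 then 1 else 0
  | n + 1 => conv (convPow μ n) μ

/-- A probability measure on a countable set, viewed as a function. -/
def IsProb {G : Type*} (μ : G → ℝ) : Prop := (∀ g, 0 ≤ μ g) ∧ HasSum μ 1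

/-- The support of `μ` generates the group as a semigroup. -/
def Nondeg {G : Type*} [Group G] (μ : G → ℝ) : Prop :=
  ∀ g : G, g ∈ Subsemigroup.closure {x : G | 0 < μ x}

/-- `μ` is aperiodic: `μ_n(1) > 0` for all large enough `n`. -/
def Aperiodic {G : Type*} [Group G] (μ : G → ℝ) : Prop :=
  ∃ N : ℕ, ∀ n : ℕ, N ≤ n → 0 < convPow μ n 1

/-- Total variation distance between two (probability) functions. -/
def tv {Z : Type*} (p q : Z → ℝ) : ℝ := (1 / 2) * ∑' z : Z, |p z - q z|

/-- Word length with respect to a finite set `S₀`. -/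
def wordLength {G : Type*} [Group G] (S₀ : Finset G) (g : G) : ℕ :=
  sInf {n : ℕ | ∃ l : List G, (∀ s ∈ l, s ∈ S₀) ∧ l.length = n ∧ l.prod = g}

/-- Finite second moment with respect to a word metric given by a finite symmetric
generating set. -/
def FinSecondMoment {G : Type*} [Group G] (μ : G → ℝ) : Prop :=
  ∃ S₀ : Finset G, (∀ s ∈ S₀, s⁻¹ ∈ S₀) ∧ Subgroup.closure (S₀ : Set G) = ⊤ ∧
    Summable (fun g : G => (wordLength S₀ g : ℝ) ^ 2 * μ g)

/-- A group is virtually abelian if it has an abelian subgroup of finite index. -/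
def VirtAbelian (G : Type*) [Group G] : Prop :=
  ∃ A : Subgroup G, A.index ≠ 0 ∧ ∀ a b : A, a * b = b * a

/-- The noised measure `π^ρ` on `G × G`. -/
def noised {G : Type*} (μ : G → ℝ) (ρ : ℝ) : G × G → ℝ :=
  fun p => ρ * μ p.1 * μ p.2 + (1 - ρ) * μ p.1 * (if p.1 = p.2 then 1 else 0)

/-- First marginal of a measure on a product. -/
def marg1 {G₁ G₂ : Type*} (ν : G₁ × G₂ → ℝ) : G₁ → ℝ := fun γ₁ => ∑' γ₂ : G₂, ν (γ₁, γ₂)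

/-- Second marginal of a measure on a product. -/
def marg2 {G₁ G₂ : Type*} (ν : G₁ × G₂ → ℝ) : G₂ → ℝ := fun γ₂ => ∑' γ₁ : G₁, ν (γ₁, γ₂)

/-- A system of representatives of the right cosets `Λ\Γ` containing the identity,
together with the representative map `rep`, constant on right cosets. -/
structure RepSystem {Γ : Type*} [Group Γ] (Λ : Subgroup Γ) where
  Δ : Finset Γ
  one_mem : (1 : Γ) ∈ Δ
  rep : Γ → Γ
  rep_mem : ∀ γ : Γ, rep γ ∈ Δ
  rep_spec : ∀ γ : Γ, γ * (rep γ)⁻¹ ∈ Λ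
  rep_idem : ∀ x ∈ Δ, rep x = x
  rep_coset : ∀ γ : Γ, ∀ v ∈ Λ, rep (v * γ) = rep γ

variable {Γ : Type*} [Group Γ] {Λ : Subgroup Γ} {m : ℕ}

/-- The cocycle `α(x,s) = ψ(x·s·(x^s)⁻¹) ∈ ℤ^m`. -/
def cocycle (ψ : Λ ≃* Multiplicative (Fin m → ℤ)) (R : RepSystem Λ) (x s : Γ) : Fin m → ℤ :=
  Multiplicative.toAdd (ψ ⟨x * s * (R.rep (x * s))⁻¹, R.rep_spec (x * s)⟩)

/-- The transfer homomorphism `θ(γ) = ∑_{x∈Δ} α(x,γ)`. -/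
def transfer (ψ : Λ ≃* Multiplicative (Fin m → ℤ)) (R : RepSystem Λ) (γ : Γ) : Fin m → ℤ :=
  ∑ x ∈ R.Δ, cocycle ψ R x γ

/-- `Φ(γ) = ψ(v)` where `γ = v·x`, `v ∈ Λ`, `x ∈ Δ`. -/
def Phi (ψ : Λ ≃* Multiplicative (Fin m → ℤ)) (R : RepSystem Λ) (γ : Γ) : Fin m → ℤ :=
  Multiplicative.toAdd (ψ ⟨γ * (R.rep γ)⁻¹, R.rep_spec γ⟩)

/-- A 1-form on the quotient diagram. -/
def IsOneForm (R : RepSystem Λ) (ω : Γ → Γ → ℝ) : Prop :=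
  ∀ x ∈ R.Δ, ∀ s : Γ, ω (R.rep (x * s)) s⁻¹ = -ω x s

/-- `χ(ω) = ∑_{x∈Δ} ∑_s c(x,s)·ω(x,s)` where `c(x,s) = μ(s)/#F`. -/
def chi (R : RepSystem Λ) (μ : Γ → ℝ) (ω : Γ → Γ → ℝ) : ℝ :=
  ∑ x ∈ R.Δ, ∑' s : Γ, μ s / (Λ.index : ℝ) * ω x s

/-- Square-integrability of a 1-form. -/
def SqInt (R : RepSystem Λ) (μ : Γ → ℝ) (ω : Γ → Γ → ℝ) : Prop :=
  ∀ x ∈ R.Δ, Summable (fun s : Γ => μ s / (Λ.index : ℝ) * ω x s ^ 2)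

/-- Harmonicity of a (square-integrable) 1-form. -/
def Harmonic (R : RepSystem Λ) (μ : Γ → ℝ) (ω : Γ → Γ → ℝ) : Prop :=
  SqInt R μ ω ∧ ∀ x ∈ R.Δ, (∑' s : Γ, μ s * ω x s) = chi R μ ω

/-- The differential `df(x,s) = f(x^s) − f(x)`. -/
def dd (R : RepSystem Λ) (f : Γ → ℝ) : Γ → Γ → ℝ := fun x s => f (R.rep (x * s)) - f x

/-- `(u, f)` is a harmonic decomposition of the 1-form `ω`: `ω = u + df` with `u`
a harmonic 1-form. -/
def IsHarmDecomp (R : RepSystem Λ) (μ : Γ → ℝ) (ω u : Γ → Γ → ℝ) (f : Γ → ℝ) : Prop :=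
  IsOneForm R u ∧ Harmonic R μ u ∧ ∀ x ∈ R.Δ, ∀ s : Γ, ω x s = u x s + dd R f x s

/-- The 1-form `v̂(x,s) = ⟨v, α(x,s)⟩` (standard inner product). -/
def vhat (ψ : Λ ≃* Multiplicative (Fin m → ℤ)) (R : RepSystem Λ) (v : Fin m → ℝ) :
    Γ → Γ → ℝ :=
  fun x s => ∑ i, v i * (cocycle ψ R x s i : ℝ)

/-- The 1-form `v̂(x,s) = B(v, α(x,s))` for a bilinear form `B`. -/
def vhatB (ψ : Λ ≃* Multiplicative (Fin m → ℤ)) (R : RepSystem Λ)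
    (B : (Fin m → ℝ) →ₗ[ℝ] (Fin m → ℝ) →ₗ[ℝ] ℝ) (v : Fin m → ℝ) : Γ → Γ → ℝ :=
  fun x s => B v (fun i => (cocycle ψ R x s i : ℝ))

/-- The drift `ζ = (1/#F)·∑_{x∈Δ}∑_s μ(s)·α(x,s) ∈ ℝ^m`. -/
def drift (ψ : Λ ≃* Multiplicative (Fin m → ℤ)) (R : RepSystem Λ) (μ : Γ → ℝ) : Fin m → ℝ :=
  fun i => (Λ.index : ℝ)⁻¹ * ∑ x ∈ R.Δ, ∑' s : Γ, μ s * (cocycle ψ R x s i : ℝ)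

/-- The covariance pairing `∑_{x,s} c(x,s)·u(x,s)·u'(x,s) − χ(u)·χ(u')`. -/
def cov (R : RepSystem Λ) (μ : Γ → ℝ) (u u' : Γ → Γ → ℝ) : ℝ :=
  (∑ x ∈ R.Δ, ∑' s : Γ, μ s / (Λ.index : ℝ) * (u x s * u' x s)) - chi R μ u * chi R μ u'

/-- The transfer operator `ℒ_v` acting on functions `Δ → ℂ`. -/
def transferOp (ψ : Λ ≃* Multiplicative (Fin m → ℤ)) (R : RepSystem Λ) (μ : Γ → ℝ)
    (v : Fin m → ℝ) (f : Γ → ℂ) : Γ → ℂ :=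
  fun x => ∑' s : Γ, (μ s : ℂ) *
    Complex.exp (2 * Real.pi * Complex.I * ((∑ i, v i * (cocycle ψ R x s i : ℝ)) : ℝ)) *
    f (R.rep (x * s))

/-- The Gaussian density `ξ_A(w)` associated with a (positive-definite) matrix `A`. -/
def gauss {d : ℕ} (A : Matrix (Fin d) (Fin d) ℝ) (w : Fin d → ℝ) : ℝ :=
  (2 * Real.pi) ^ (-(d : ℝ) / 2) * A.det ^ (-(1 : ℝ) / 2) *
    Real.exp (-(w ⬝ᵥ A⁻¹.mulVec w) / 2)

/-- The product representative system for `Λ₁ × Λ₂ ≤ Γ₁ × Γ₂`. -/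
def prodRep {Γ₁ : Type*} [Group Γ₁] {Γ₂ : Type*} [Group Γ₂]
    {Λ₁ : Subgroup Γ₁} {Λ₂ : Subgroup Γ₂}
    (R₁ : RepSystem Λ₁) (R₂ : RepSystem Λ₂) : RepSystem (Λ₁.prod Λ₂) where
  Δ := R₁.Δ ×ˢ R₂.Δ
  one_mem := Finset.mem_product.mpr ⟨R₁.one_mem, R₂.one_mem⟩
  rep := fun p => (R₁.rep p.1, R₂.rep p.2)
  rep_mem := fun p => Finset.mem_product.mpr ⟨R₁.rep_mem p.1, R₂.rep_mem p.2⟩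
  rep_spec := fun p => Subgroup.mem_prod.mpr ⟨R₁.rep_spec p.1, R₂.rep_spec p.2⟩
  rep_idem := fun x hx => by
    rcases Finset.mem_product.mp hx with ⟨h1, h2⟩
    exact Prod.ext_iff.mpr ⟨R₁.rep_idem x.1 h1, R₂.rep_idem x.2 h2⟩
  rep_coset := fun p v hv => by
    rcases Subgroup.mem_prod.mp hv with ⟨h1, h2⟩
    exact Prod.ext_iff.mpr ⟨R₁.rep_coset p.1 v.1 h1, R₂.rep_coset p.2 v.2 h2⟩

/-- The 1-form `𝐯̂(x,s) = ⟨𝐯, α(x,s)⟩` on a product, standard inner product. -/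
def vhat2 {Γ₁ : Type*} [Group Γ₁] {Γ₂ : Type*} [Group Γ₂]
    {Λ₁ : Subgroup Γ₁} {Λ₂ : Subgroup Γ₂} {m₁ m₂ : ℕ}
    (ψ₁ : Λ₁ ≃* Multiplicative (Fin m₁ → ℤ)) (R₁ : RepSystem Λ₁)
    (ψ₂ : Λ₂ ≃* Multiplicative (Fin m₂ → ℤ)) (R₂ : RepSystem Λ₂)
    (v : (Fin m₁ → ℝ) × (Fin m₂ → ℝ)) : (Γ₁ × Γ₂) → (Γ₁ × Γ₂) → ℝ :=
  fun x s => (∑ i, v.1 i * (cocycle ψ₁ R₁ x.1 s.1 i : ℝ)) +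
    ∑ i, v.2 i * (cocycle ψ₂ R₂ x.2 s.2 i : ℝ)

/-- The 1-form `𝐯̂(x,s) = ⟨𝐯, α(x,s)⟩` on a product, orthogonal-sum of the two
bilinear forms `B₁`, `B₂`. -/
def vhatB2 {Γ₁ : Type*} [Group Γ₁] {Γ₂ : Type*} [Group Γ₂]
    {Λ₁ : Subgroup Γ₁} {Λ₂ : Subgroup Γ₂} {m₁ m₂ : ℕ}
    (ψ₁ : Λ₁ ≃* Multiplicative (Fin m₁ → ℤ)) (R₁ : RepSystem Λ₁)
    (B₁ : (Fin m₁ → ℝ) →ₗ[ℝ] (Fin m₁ → ℝ) →ₗ[ℝ] ℝ)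
    (ψ₂ : Λ₂ ≃* Multiplicative (Fin m₂ → ℤ)) (R₂ : RepSystem Λ₂)
    (B₂ : (Fin m₂ → ℝ) →ₗ[ℝ] (Fin m₂ → ℝ) →ₗ[ℝ] ℝ)
    (v : (Fin m₁ → ℝ) × (Fin m₂ → ℝ)) : (Γ₁ × Γ₂) → (Γ₁ × Γ₂) → ℝ :=
  fun x s => B₁ v.1 (fun i => (cocycle ψ₁ R₁ x.1 s.1 i : ℝ)) +
    B₂ v.2 (fun i => (cocycle ψ₂ R₂ x.2 s.2 i : ℝ))

end

/-!
Since the vectors `ψ(λ)` span `ℝ^m`, the hypothesis on `Ad` makes it a representation of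
`F = Γ/Λ`, and `θ̲` is its averaging operator: an idempotent onto the `F`-invariant vectors, and
self-adjoint for every `F`-invariant bilinear form. It remains to see that the invariants are
`span θ(Γ)`. Conjugating the cocycle `α` by `g` changes `α(x, γ)` into `α(x', γ)` plus a
coboundary, with `x ↦ x'` a permutation of `Δ`, so every `θ(γ)` is invariant. Conversely, for
`λ ∈ Λ` every coset is fixed by `λ`, so `α(x, λ) = ψ(xλx⁻¹)` and `θ̲ ψ(λ) = θ(λ) / #F`.
-/

theorem _root_.Representation.averageMap_apply {k G V : Type*} [CommRing k] [Group G]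
    [AddCommGroup V] [Module k V] [Fintype G] [Invertible (Fintype.card G : k)]
    (ρ : Representation k G V) (v : V) :
    ρ.averageMap v = ⅟(Fintype.card G : k) • ∑ g : G, ρ g v := by
  simp [GroupAlgebra.average, map_sum]

theorem _root_.Representation.isAdjointPair_averageMap {k G V : Type*} [CommRing k] [Group G]
    [AddCommGroup V] [Module k V] [Fintype G] [Invertible (Fintype.card G : k)]
    (ρ : Representation k G V) {B : V →ₗ[k] V →ₗ[k] k}
    (hB : ∀ g u w, B (ρ g u) (ρ g w) = B u w) :
    B.IsAdjointPair B ρ.averageMap ρ.averageMap := by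
  intro u w
  have hmove : ∀ g, B (ρ g u) w = B u (ρ g⁻¹ w) := fun g => by
    rw [← hB g u, ← Module.End.mul_apply (ρ g), ← map_mul, mul_inv_cancel, map_one,
      Module.End.one_apply]
  simp only [ρ.averageMap_apply, map_smul, map_sum, LinearMap.smul_apply, LinearMap.sum_apply,
    hmove]
  exact congrArg _ (Fintype.sum_equiv (Equiv.inv G) _ _ fun _ => rfl)

def castVec (ι : Type*) : (ι → ℤ) →+ (ι → ℝ) := (Int.castAddHom ℝ).compLeft ι

theorem span_range_castVec_eq_top (ι : Type*) [Finite ι] :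
    Submodule.span ℝ (Set.range (castVec ι)) = ⊤ := by
  classical
  have := Fintype.ofFinite ι
  refine eq_top_iff.mpr ((Pi.basisFun ℝ ι).span_eq.symm.le.trans (Submodule.span_mono ?_))
  rintro _ ⟨i, rfl⟩
  exact ⟨Pi.single i 1, by ext j; simp [castVec, Pi.single_apply]⟩

theorem span_range_castVec_toAdd_eq_top {L ι : Type*} [Mul L] [Finite ι]
    (ψ : L ≃* Multiplicative (ι → ℤ)) :
    Submodule.span ℝ (Set.range fun l : L => castVec ι (ψ l).toAdd) = ⊤ := by
  have hψ : Function.Surjective fun l : L => (ψ l).toAdd :=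
    Multiplicative.toAdd.surjective.comp ψ.surjective
  rw [← span_range_castVec_eq_top ι, ← hψ.range_comp]
  rfl

namespace RepSystem

variable {Γ : Type*} [Group Γ] {Λ : Subgroup Γ} (R : RepSystem Λ)

/-- The factor `v ∈ Λ` in `γ = v · x`, `x ∈ Δ`. By definition
`Phi ψ R γ = toAdd (ψ (R.lambdaPart γ))` and `cocycle ψ R x s = Phi ψ R (x * s)`. -/
def lambdaPart (γ : Γ) : Λ :=
  ⟨γ * (R.rep γ)⁻¹, R.rep_spec γ⟩

variable [Λ.Normal]

theorem rep_eq_of_mk_eq {a b : Γ} (h : (a : Γ ⧸ Λ) = b) : R.rep a = R.rep b := by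
  have hab : a * b⁻¹ ∈ Λ :=
    Subgroup.Normal.mem_comm inferInstance (by simpa using Λ.inv_mem (QuotientGroup.eq.mp h))
  rw [← R.rep_coset b _ hab, inv_mul_cancel_right]

theorem mk_rep (γ : Γ) : ((R.rep γ : Γ) : Γ ⧸ Λ) = γ :=
  QuotientGroup.eq.mpr (Subgroup.Normal.mem_comm inferInstance (R.rep_spec γ))

theorem rep_eq_of_mk_eq_of_mem {γ x : Γ} (hx : x ∈ R.Δ) (h : (γ : Γ ⧸ Λ) = x) : R.rep γ = x :=
  (R.rep_eq_of_mk_eq h).trans (R.rep_idem x hx)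

theorem sum_rep_comp_of_perm {M : Type*} [AddCommMonoid M] (σ : Equiv.Perm (Γ ⧸ Λ))
    {h : Γ → Γ} (hh : ∀ x, (h x : Γ ⧸ Λ) = σ x) (F : Γ → M) :
    ∑ x ∈ R.Δ, F (R.rep (h x)) = ∑ x ∈ R.Δ, F x := by
  refine Finset.sum_nbij' (fun x => R.rep (h x)) (fun y => R.rep (σ.symm y).out)
    (fun _ _ => R.rep_mem _) (fun _ _ => R.rep_mem _) (fun x hx => ?_) (fun y hy => ?_)
    (fun _ _ => rfl)
  · exact R.rep_eq_of_mk_eq_of_mem hx (by simp [mk_rep, hh])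
  · exact R.rep_eq_of_mk_eq_of_mem hy (by simp [mk_rep, hh])

theorem sum_eq_sum_quotient {M : Type*} [AddCommMonoid M] [Fintype (Γ ⧸ Λ)]
    (G : Γ ⧸ Λ → M) : ∑ x ∈ R.Δ, G x = ∑ q, G q :=
  Finset.sum_nbij' (↑) (fun q => R.rep q.out) (fun _ _ => Finset.mem_univ _)
    (fun _ _ => R.rep_mem _) (fun x hx => R.rep_eq_of_mk_eq_of_mem hx (by simp))
    (fun q _ => by simp [mk_rep]) (fun _ _ => rfl)

theorem conjNormal_lambdaPart (g x γ : Γ) :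
    MulAut.conjNormal g (R.lambdaPart (x * γ)) =
      R.lambdaPart (g * x) * R.lambdaPart (R.rep (g * x) * γ) *
        (R.lambdaPart (g * R.rep (x * γ)))⁻¹ := by
  have e₁ : R.rep (R.rep (g * x) * γ) = R.rep (g * x * γ) :=
    R.rep_eq_of_mk_eq (by simp [R.mk_rep])
  have e₂ : R.rep (g * R.rep (x * γ)) = R.rep (g * x * γ) :=
    R.rep_eq_of_mk_eq (by simp [R.mk_rep, mul_assoc])
  ext
  simp only [MulAut.conjNormal_apply, lambdaPart, Subgroup.coe_mul, Subgroup.coe_inv, e₁, e₂]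
  group

end RepSystem

section AdRepresentation

variable {Γ : Type*} [Group Γ] {Λ : Subgroup Γ} [Λ.Normal] {m : ℕ}
  {ψ : Λ ≃* Multiplicative (Fin m → ℤ)} {Ad : Γ ⧸ Λ → (Fin m → ℝ) →ₗ[ℝ] (Fin m → ℝ)}

def adRep (hAd : ∀ (x : Γ) (l : Λ),
      Ad x (castVec (Fin m) (ψ l).toAdd) = castVec (Fin m) (ψ (MulAut.conjNormal x l)).toAdd) :
    Representation ℝ (Γ ⧸ Λ) (Fin m → ℝ) where
  toFun := Ad
  map_one' := LinearMap.ext_on_range (span_range_castVec_toAdd_eq_top ψ) fun l => by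
    simpa using hAd 1 l
  map_mul' := by
    rintro ⟨x⟩ ⟨y⟩
    refine LinearMap.ext_on_range (span_range_castVec_toAdd_eq_top ψ) fun l => ?_
    show Ad (x * y : Γ) _ = Ad x (Ad y _)
    rw [hAd, hAd, hAd, map_mul, MulAut.mul_apply]

variable (R : RepSystem Λ) (hAd : ∀ (x : Γ) (l : Λ),
      Ad x (castVec (Fin m) (ψ l).toAdd) = castVec (Fin m) (ψ (MulAut.conjNormal x l)).toAdd)
include hAd

theorem ad_castVec_cocycle (g x γ : Γ) :
    Ad g (castVec (Fin m) (cocycle ψ R x γ)) =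
      castVec (Fin m) (Phi ψ R (g * x)) + castVec (Fin m) (cocycle ψ R (R.rep (g * x)) γ) -
        castVec (Fin m) (Phi ψ R (g * R.rep (x * γ))) := by
  change Ad g (castVec (Fin m) (ψ (R.lambdaPart (x * γ))).toAdd) = _
  rw [hAd, R.conjNormal_lambdaPart, map_mul ψ, map_mul ψ, map_inv ψ, toAdd_mul, toAdd_mul,
    toAdd_inv, map_add, map_add, map_neg, ← sub_eq_add_neg]
  rfl

theorem castVec_transfer_mem_invariants (γ : Γ) :
    castVec (Fin m) (transfer ψ R γ) ∈ (adRep hAd).invariants := by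
  rintro ⟨g⟩
  change Ad g _ = _
  simp only [transfer, map_sum, ad_castVec_cocycle R hAd, Finset.sum_sub_distrib,
    Finset.sum_add_distrib]
  rw [R.sum_rep_comp_of_perm (Equiv.mulLeft (g : Γ ⧸ Λ)) (h := (g * ·)) (fun _ => rfl)
    (fun y => castVec (Fin m) (cocycle ψ R y γ)),
    R.sum_rep_comp_of_perm (Equiv.mulRight (γ : Γ ⧸ Λ)) (h := (· * γ)) (fun _ => rfl)
    (fun y => castVec (Fin m) (Phi ψ R (g * y)))]
  abel

variable [Fintype (Γ ⧸ Λ)] [Invertible (Fintype.card (Γ ⧸ Λ) : ℝ)]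

theorem averageMap_castVec_toAdd (l : Λ) :
    (adRep hAd).averageMap (castVec (Fin m) (ψ l).toAdd) =
      ⅟(Fintype.card (Γ ⧸ Λ) : ℝ) • castVec (Fin m) (transfer ψ R l) := by
  rw [Representation.averageMap_apply, ← R.sum_eq_sum_quotient, transfer, map_sum]
  refine congrArg _ (Finset.sum_congr rfl fun x hx => ?_)
  have hrep : R.rep (x * l) = x := R.rep_eq_of_mk_eq_of_mem hx (by simp)
  change Ad x _ = castVec (Fin m) (ψ (R.lambdaPart (x * l))).toAdd
  rw [hAd]
  congr 4
  ext
  simp [RepSystem.lambdaPart, hrep]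

theorem range_averageMap_eq_span_transfer :
    LinearMap.range (adRep hAd).averageMap =
      Submodule.span ℝ (castVec (Fin m) '' Set.range (transfer ψ R)) := by
  apply le_antisymm
  · rw [LinearMap.range_eq_map, ← span_range_castVec_toAdd_eq_top ψ, Submodule.map_span,
      Submodule.span_le, ← Set.range_comp]
    rintro _ ⟨l, rfl⟩
    rw [Function.comp_apply, averageMap_castVec_toAdd R hAd]
    exact Submodule.smul_mem _ _ (Submodule.subset_span ⟨_, ⟨l, rfl⟩, rfl⟩)
  · rw [Submodule.span_le]
    rintro _ ⟨_, ⟨γ, rfl⟩, rfl⟩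
    exact ⟨_, (adRep hAd).averageMap_id _ (castVec_transfer_mem_invariants R hAd γ)⟩

end AdRepresentation

theorem normalized_transfer_is_projection_general
    {Γ : Type*} [Group Γ] {Λ : Subgroup Γ} (hN : Λ.Normal) (hI : Λ.index ≠ 0)
    {m : ℕ} (ψ : Λ ≃* Multiplicative (Fin m → ℤ)) (R : RepSystem Λ)
    (Ad : Γ ⧸ Λ → (Fin m → ℝ) →ₗ[ℝ] (Fin m → ℝ))
    (hAd : ∀ (x : Γ) (lam : Λ),
        Ad (QuotientGroup.mk x) (fun i => (Multiplicative.toAdd (ψ lam) i : ℝ)) =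
          fun i => (Multiplicative.toAdd
            (ψ ⟨x * (lam : Γ) * x⁻¹, hN.conj_mem (lam : Γ) lam.2 x⟩) i : ℝ))
    (B : (Fin m → ℝ) →ₗ[ℝ] (Fin m → ℝ) →ₗ[ℝ] ℝ)
    (hBinv : ∀ (f : Γ ⧸ Λ) (u w : Fin m → ℝ), B (Ad f u) (Ad f w) = B u w)
    (T : (Fin m → ℝ) →ₗ[ℝ] (Fin m → ℝ))
    (hT : ∀ v : Fin m → ℝ, T v = (Λ.index : ℝ)⁻¹ • ∑' f : Γ ⧸ Λ, Ad f v) :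
    (∀ v : Fin m → ℝ, T (T v) = T v) ∧
    (∀ u w : Fin m → ℝ, B (T u) w = B u (T w)) ∧
    LinearMap.range T =
      Submodule.span ℝ ((fun z : Fin m → ℤ => fun i => (z i : ℝ)) ''
        Set.range (transfer ψ R)) := by
  have : Λ.FiniteIndex := ⟨hI⟩
  have := Λ.fintypeQuotientOfFiniteIndex
  let ρ := adRep (ψ := ψ) hAd
  have hTρ : T = ρ.averageMap := LinearMap.ext fun v => by
    rw [hT, tsum_fintype, ρ.averageMap_apply, invOf_eq_inv, Subgroup.index_eq_card,
      Nat.card_eq_fintype_card]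
    rfl
  subst hTρ
  exact ⟨fun v => ρ.averageMap_id _ (ρ.averageMap_invariant v),
    ρ.isAdjointPair_averageMap (hBinv ·), range_averageMap_eq_span_transfer R hAd⟩

/-- The normalized transfer `θ̲ = (1/#F)·∑_{f∈F} Ad(f)` is the
orthogonal projection of `ℝ^m` onto the span of the image of the transfer
homomorphism, for any Ad-invariant inner product. -/
theorem normalized_transfer_is_projection
    {Γ : Type*} [Group Γ] {Λ : Subgroup Γ} (hN : Λ.Normal) (hI : Λ.index ≠ 0)
    {m : ℕ} (hm : 1 ≤ m) (ψ : Λ ≃* Multiplicative (Fin m → ℤ)) (R : RepSystem Λ)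
    (Ad : Γ ⧸ Λ → (Fin m → ℝ) →ₗ[ℝ] (Fin m → ℝ))
    (hAd : ∀ (x : Γ) (lam : Λ),
        Ad (QuotientGroup.mk x) (fun i => (Multiplicative.toAdd (ψ lam) i : ℝ)) =
          fun i => (Multiplicative.toAdd
            (ψ ⟨x * (lam : Γ) * x⁻¹, hN.conj_mem (lam : Γ) lam.2 x⟩) i : ℝ))
    (B : (Fin m → ℝ) →ₗ[ℝ] (Fin m → ℝ) →ₗ[ℝ] ℝ)
    (hBsymm : ∀ u w : Fin m → ℝ, B u w = B w u)
    (hBpos : ∀ u : Fin m → ℝ, u ≠ 0 → 0 < B u u)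
    (hBinv : ∀ (f : Γ ⧸ Λ) (u w : Fin m → ℝ), B (Ad f u) (Ad f w) = B u w)
    (T : (Fin m → ℝ) →ₗ[ℝ] (Fin m → ℝ))
    (hT : ∀ v : Fin m → ℝ, T v = (Λ.index : ℝ)⁻¹ • ∑' f : Γ ⧸ Λ, Ad f v) :
    (∀ v : Fin m → ℝ, T (T v) = T v) ∧
    (∀ u w : Fin m → ℝ, B (T u) w = B u (T w)) ∧
    LinearMap.range T =
      Submodule.span ℝ ((fun z : Fin m → ℤ => fun i => (z i : ℝ)) ''
        Set.range (transfer ψ R)) :=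
  normalized_transfer_is_projection_general hN hI ψ R Ad hAd B hBinv T hT

end NSVA
end

section
/- Let μ be a non-degenerate probability measure on Γ. Then every square-integrable 1-form ω on (Γ, Λ, Δ, μ) decomposes as ω = u + df where u is a harmonic 1-form and f : Δ → ℝ; the harmonic part is unique (if u + df = u' + df' with u, u' harmonic 1-forms and f, f' : Δ → ℝ, then u = u' on all of Δ×Γ); and moreover χ(ω) = χ(u). -/
open scoped BigOperators Classical
open Filter Matrix MeasureTheory

namespace NSVA

/-!
Everything reduces to the finite random walk induced by `μ` on `Δ ≅ Λ\Γ`: for `f : Δ → ℝ` the mean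
`∑ₛ μ(s) df(x,s)` is `(P - 1) f (x)`, with `P` the Markov operator of that walk. Each `s` permutes
`Δ`, so `P - 1` takes values in the functions of mean zero; by the maximum principle and
non-degeneracy its kernel consists of the constants, hence it maps onto the functions of mean zero.
Solving `(P - 1) f = b` with `b(x) = ∑ₛ μ(s) ω(x,s) - χ(ω)` makes `ω - df` harmonic, and as
`#Δ = [Γ:Λ]`, `χ` is the average of these means, so `χ(ω - df) = χ(ω)`. If `u + df = u' + df'`,
then `(P - 1)(f' - f)` is the constant `χ(u) - χ(u')`, which vanishes because the values of
`(P - 1) h` always sum to zero; so `f' - f` is constant and `u = u'`.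
-/

namespace RepSystem

variable {Γ : Type*} [Group Γ] {Λ : Subgroup Γ} (R : RepSystem Λ)

theorem rep_rep_mul (a b : Γ) : R.rep (R.rep a * b) = R.rep (a * b) := by
  have h : R.rep a * b = (a * (R.rep a)⁻¹)⁻¹ * (a * b) := by group
  rw [h, R.rep_coset _ _ (Λ.inv_mem (R.rep_spec a))]

theorem rep_eq_of_mul_inv_mem {a b : Γ} (h : b * a⁻¹ ∈ Λ) : R.rep b = R.rep a := by
  simpa using R.rep_coset a _ h

theorem card_eq_index : R.Δ.card = Λ.index := by
  have hbij : Function.Bijective fun x : R.Δ => Quotient.mk (QuotientGroup.rightRel Λ) (x : Γ) := by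
    refine ⟨fun x y hxy => ?_, fun q => ?_⟩
    · have h := R.rep_eq_of_mul_inv_mem (QuotientGroup.rightRel_apply.mp (Quotient.exact hxy))
      rw [R.rep_idem _ x.2, R.rep_idem _ y.2] at h
      exact Subtype.ext h.symm
    · induction q using Quotient.inductionOn with
      | h γ => exact ⟨⟨R.rep γ, R.rep_mem γ⟩,
          Quotient.sound (QuotientGroup.rightRel_apply.mpr (R.rep_spec γ))⟩
  rw [← Fintype.card_coe, ← Nat.card_eq_fintype_card, Nat.card_eq_of_bijective _ hbij,
    Nat.card_congr (QuotientGroup.quotientRightRelEquivQuotientLeftRel Λ)]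
  rfl

theorem index_ne_zero (R : RepSystem Λ) : Λ.index ≠ 0 := by
  rw [← R.card_eq_index]
  exact (Finset.card_pos.mpr ⟨1, R.one_mem⟩).ne'

instance : Nonempty R.Δ := ⟨⟨1, R.one_mem⟩⟩

def proj (γ : Γ) : R.Δ := ⟨R.rep γ, R.rep_mem γ⟩

@[simp]
theorem proj_coe (x : R.Δ) : R.proj x = x := Subtype.ext (R.rep_idem x x.2)

/-- The right action `x ↦ x^s` of `Γ` on `Δ ≅ Λ\Γ`. -/
def act (s : Γ) (x : R.Δ) : R.Δ := R.proj (x * s)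

theorem act_act (s t : Γ) (x : R.Δ) : R.act t (R.act s x) = R.act (s * t) x :=
  Subtype.ext <| by simp only [act, proj, rep_rep_mul, mul_assoc]

@[simp]
theorem act_one (x : R.Δ) : R.act 1 x = x := by simp [act]

theorem act_inv_mul (x y : R.Δ) : R.act ((x : Γ)⁻¹ * y) x = y := by simp [act]

theorem sum_comp_act {M : Type*} [AddCommMonoid M] (s : Γ) (g : R.Δ → M) :
    ∑ x, g (R.act s x) = ∑ x, g x :=
  Equiv.sum_comp ⟨R.act s, R.act s⁻¹, fun x => by simp [act_act], fun x => by simp [act_act]⟩ g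

end RepSystem

theorem summable_mul_comp_of_fintype {ι α : Type*} [Fintype α] {μ : ι → ℝ} (hμ : Summable μ)
    (g : α → ℝ) (φ : ι → α) : Summable fun s => μ s * g (φ s) :=
  Summable.of_norm_bounded (hμ.abs.mul_right (∑ y, |g y|)) fun s => by
    rw [Real.norm_eq_abs, abs_mul]
    exact mul_le_mul_of_nonneg_left
      (Finset.single_le_sum (fun y _ => abs_nonneg (g y)) (Finset.mem_univ (φ s))) (abs_nonneg _)

theorem summable_mul_of_summable_mul_sq {ι : Type*} {μ a : ι → ℝ} (hμ₀ : ∀ s, 0 ≤ μ s)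
    (hμ : Summable μ) (h : Summable fun s => μ s * a s ^ 2) : Summable fun s => μ s * a s :=
  Summable.of_norm_bounded (hμ.add h) fun s => by
    rw [Real.norm_eq_abs, abs_mul, abs_of_nonneg (hμ₀ s)]
    nlinarith [hμ₀ s, sq_nonneg (|a s| - 1), sq_abs (a s)]

section HarmonicForms

variable {Γ : Type*} [Group Γ] {Λ : Subgroup Γ} {R : RepSystem Λ} {μ : Γ → ℝ}

theorem dd_coe (f : Γ → ℝ) (x : R.Δ) (s : Γ) : dd R f x s = f (R.act s x) - f x := rfl

variable (R) in
theorem isOneForm_dd (f : Γ → ℝ) : IsOneForm R (dd R f) := by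
  intro x hx s
  simp only [dd, RepSystem.rep_rep_mul, mul_inv_cancel_right, R.rep_idem x hx]
  ring

theorem IsOneForm.sub {ω η : Γ → Γ → ℝ} (hω : IsOneForm R ω) (hη : IsOneForm R η) :
    IsOneForm R (ω - η) := by
  intro x hx s
  simp only [Pi.sub_apply, hω x hx s, hη x hx s]
  ring

theorem sqInt_iff {ω : Γ → Γ → ℝ} :
    SqInt R μ ω ↔ ∀ x ∈ R.Δ, Summable fun s => μ s * ω x s ^ 2 := by
  have h : (Λ.index : ℝ) ≠ 0 := Nat.cast_ne_zero.mpr R.index_ne_zero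
  refine forall₂_congr fun x _ => ?_
  simp_rw [div_mul_eq_mul_div]
  exact summable_div_const_iff h

theorem SqInt.sub {ω η : Γ → Γ → ℝ} (hμ₀ : ∀ s, 0 ≤ μ s) (hω : SqInt R μ ω)
    (hη : SqInt R μ η) : SqInt R μ (ω - η) := by
  rw [sqInt_iff] at *
  intro x hx
  refine Summable.of_nonneg_of_le (fun s => mul_nonneg (hμ₀ s) (sq_nonneg _)) (fun s => ?_)
    (((hω x hx).add (hη x hx)).mul_left 2)
  simp only [Pi.sub_apply]
  nlinarith [mul_nonneg (hμ₀ s) (sq_nonneg (ω x s + η x s))]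

theorem sqInt_dd (hμ : Summable μ) (f : Γ → ℝ) : SqInt R μ (dd R f) :=
  sqInt_iff.mpr fun x hx =>
    summable_mul_comp_of_fintype hμ (fun y : R.Δ => (f y - f x) ^ 2) (R.act · ⟨x, hx⟩)

theorem SqInt.summable_mul {ω : Γ → Γ → ℝ} (hμ : IsProb μ) (hω : SqInt R μ ω) (x : R.Δ) :
    Summable fun s => μ s * ω x s :=
  summable_mul_of_summable_mul_sq hμ.1 hμ.2.summable (sqInt_iff.mp hω x x.2)

theorem summable_mul_dd (hμ : Summable μ) (f : Γ → ℝ) (x : R.Δ) :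
    Summable fun s => μ s * dd R f x s :=
  summable_mul_comp_of_fintype hμ (fun y : R.Δ => f y - f x) (R.act · x)

variable (R) in
theorem chi_eq (μ : Γ → ℝ) (ω : Γ → Γ → ℝ) :
    chi R μ ω = (Λ.index : ℝ)⁻¹ * ∑ x ∈ R.Δ, ∑' s, μ s * ω x s := by
  simp_rw [chi, Finset.mul_sum, ← tsum_mul_left, div_eq_inv_mul, mul_assoc]

theorem chi_eq_of_forall_tsum_eq {ω : Γ → Γ → ℝ} {c : ℝ}
    (h : ∀ x ∈ R.Δ, ∑' s, μ s * ω x s = c) : chi R μ ω = c := by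
  rw [chi_eq, Finset.sum_congr rfl h, Finset.sum_const, R.card_eq_index, nsmul_eq_mul,
    inv_mul_cancel_left₀ (Nat.cast_ne_zero.mpr R.index_ne_zero)]

variable (R μ) in
/-- The generator `P - 1` of the random walk induced by `μ` on `Δ ≅ Λ\Γ`. -/
noncomputable def laplacian (g : R.Δ → ℝ) (x : R.Δ) : ℝ := ∑' s, μ s * (g (R.act s x) - g x)

theorem tsum_mul_dd_eq_laplacian (f : Γ → ℝ) (x : R.Δ) :
    ∑' s, μ s * dd R f x s = laplacian R μ (fun y : R.Δ => f y) x := rfl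

theorem summable_laplacian (hμ : Summable μ) (g : R.Δ → ℝ) (x : R.Δ) :
    Summable fun s => μ s * (g (R.act s x) - g x) :=
  summable_mul_comp_of_fintype hμ (fun y => g y - g x) (R.act · x)

theorem laplacian_add (hμ : Summable μ) (g h : R.Δ → ℝ) :
    laplacian R μ (g + h) = laplacian R μ g + laplacian R μ h := funext fun x => by
  simp only [laplacian, Pi.add_apply]
  rw [← (summable_laplacian hμ g x).tsum_add (summable_laplacian hμ h x)]
  exact tsum_congr fun s => by ring

theorem laplacian_smul (c : ℝ) (g : R.Δ → ℝ) :
    laplacian R μ (c • g) = c • laplacian R μ g := funext fun x => by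
  simp only [laplacian, Pi.smul_apply, smul_eq_mul, ← tsum_mul_left]
  exact tsum_congr fun s => by ring

theorem sum_laplacian (hμ : Summable μ) (g : R.Δ → ℝ) : ∑ x, laplacian R μ g x = 0 := by
  have h : ∀ s, ∑ x, μ s * (g (R.act s x) - g x) = 0 := fun s => by
    rw [← Finset.mul_sum, Finset.sum_sub_distrib, R.sum_comp_act, sub_self, mul_zero]
  simp only [laplacian]
  rw [← Summable.tsum_finsetSum (s := Finset.univ) fun x _ => summable_laplacian hμ g x,
    tsum_congr h, tsum_zero]

theorem eq_zero_of_forall_laplacian_eq (hμ : Summable μ) {g : R.Δ → ℝ} {c : ℝ}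
    (h : ∀ x, laplacian R μ g x = c) : c = 0 := by
  have := sum_laplacian hμ g
  rw [Finset.sum_congr rfl fun x _ => h x, Finset.sum_const, nsmul_eq_mul] at this
  exact (mul_eq_zero.mp this).resolve_left (Nat.cast_ne_zero.mpr Finset.univ_nonempty.card_ne_zero)

theorem apply_act_eq_of_forall_le (hμ : IsProb μ) {g : R.Δ → ℝ} {x : R.Δ}
    (hmax : ∀ y, g y ≤ g x) (hx : laplacian R μ g x = 0) {s : Γ} (hs : 0 < μ s) :
    g (R.act s x) = g x := by
  have hsum : HasSum (fun t => μ t * (g x - g (R.act t x))) 0 := by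
    have := (summable_mul_comp_of_fintype hμ.2.summable (fun y => g x - g y) (R.act · x)).hasSum
    convert this using 1
    rw [eq_comm, ← neg_eq_zero, ← tsum_neg, ← hx]
    exact tsum_congr fun t => by ring
  have := congrFun ((hasSum_zero_iff_of_nonneg fun t =>
    mul_nonneg (hμ.1 t) (sub_nonneg.2 (hmax _))).mp hsum) s
  have := (mul_eq_zero.mp this).resolve_left hs.ne'
  linarith

theorem eq_of_laplacian_eq_zero (hμ : IsProb μ) (hnd : Nondeg μ) {g : R.Δ → ℝ}
    (hg : laplacian R μ g = 0) (x y : R.Δ) : g x = g y := by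
  obtain ⟨x₀, hx₀⟩ := Finite.exists_max g
  have hclosed : ∀ γ ∈ Subsemigroup.closure {s | 0 < μ s}, ∀ x, g x = g x₀ →
      g (R.act γ x) = g x₀ := by
    intro γ hγ
    induction hγ using Subsemigroup.closure_induction with
    | mem s hs =>
      exact fun x hx => (apply_act_eq_of_forall_le hμ (fun y => (hx₀ y).trans_eq hx.symm)
        (congrFun hg x) hs).trans hx
    | mul a b _ _ iha ihb => exact fun x hx => R.act_act a b x ▸ ihb _ (iha x hx)
  have hconst : ∀ y, g y = g x₀ := fun y => by
    simpa [R.act_inv_mul] using hclosed _ (hnd ((x₀ : Γ)⁻¹ * y)) x₀ rfl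
  rw [hconst x, hconst y]

theorem exists_laplacian_eq (hμ : IsProb μ) (hnd : Nondeg μ) {b : R.Δ → ℝ}
    (hb : ∑ x, b x = 0) : ∃ g, laplacian R μ g = b := by
  let L : (R.Δ → ℝ) →ₗ[ℝ] R.Δ → ℝ :=
    ⟨⟨laplacian R μ, laplacian_add hμ.2.summable⟩, laplacian_smul⟩
  let V₀ := LinearMap.ker (∑ x, LinearMap.proj x : (R.Δ → ℝ) →ₗ[ℝ] ℝ)
  have hV₀ : ∀ g, g ∈ V₀ ↔ ∑ x, g x = 0 := fun g => by simp [V₀]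
  let L₀ : V₀ →ₗ[ℝ] V₀ := L.restrict fun g _ => (hV₀ _).mpr (sum_laplacian hμ.2.summable g)
  have hinj : Function.Injective L₀ := by
    rw [← LinearMap.ker_eq_bot, LinearMap.ker_eq_bot']
    rintro ⟨g, hg⟩ hLg
    have hconst : ∀ x y, g x = g y := eq_of_laplacian_eq_zero hμ hnd (congrArg Subtype.val hLg)
    ext y
    show g y = 0
    have hsum := (hV₀ g).mp hg
    rw [Finset.sum_congr rfl fun x _ => hconst x y, Finset.sum_const, nsmul_eq_mul] at hsum
    exact (mul_eq_zero.mp hsum).resolve_left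
      (Nat.cast_ne_zero.mpr Finset.univ_nonempty.card_ne_zero)
  obtain ⟨⟨g, _⟩, hg⟩ := LinearMap.injective_iff_surjective.mp hinj ⟨b, (hV₀ b).mpr hb⟩
  exact ⟨g, congrArg Subtype.val hg⟩

theorem exists_isHarmDecomp (hμ : IsProb μ) (hnd : Nondeg μ) {ω : Γ → Γ → ℝ}
    (hω : IsOneForm R ω) (hsq : SqInt R μ ω) :
    ∃ u f, IsHarmDecomp R μ ω u f ∧ chi R μ ω = chi R μ u := by
  set b : R.Δ → ℝ := fun x => ∑' s, μ s * ω x s - chi R μ ω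
  have hb : ∑ x, b x = 0 := by
    simp only [b, Finset.sum_sub_distrib, Finset.sum_const, Finset.card_univ, Fintype.card_coe,
      R.card_eq_index, nsmul_eq_mul, Finset.sum_coe_sort R.Δ (fun x => ∑' s, μ s * ω x s), chi_eq]
    rw [mul_inv_cancel_left₀ (Nat.cast_ne_zero.mpr R.index_ne_zero), sub_self]
  obtain ⟨g, hg⟩ := exists_laplacian_eq hμ hnd hb
  set f : Γ → ℝ := fun γ => g (R.proj γ)
  have hf : (fun y : R.Δ => f y) = g := funext fun y => congrArg g (R.proj_coe y)
  have hmean : ∀ y : R.Δ, ∑' s, μ s * (ω - dd R f) y s = chi R μ ω := fun y => by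
    calc ∑' s, μ s * (ω - dd R f) y s = ∑' s, (μ s * ω y s - μ s * dd R f y s) :=
          tsum_congr fun s => mul_sub _ _ _
      _ = ∑' s, μ s * ω y s - laplacian R μ g y := by
          rw [(hsq.summable_mul hμ y).tsum_sub (summable_mul_dd hμ.2.summable f y), tsum_mul_dd_eq_laplacian, hf]
      _ = chi R μ ω := by rw [hg]; ring
  have hchi : chi R μ (ω - dd R f) = chi R μ ω := chi_eq_of_forall_tsum_eq fun x hx => hmean ⟨x, hx⟩
  refine ⟨ω - dd R f, f, ⟨hω.sub (isOneForm_dd R f),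
    ⟨hsq.sub hμ.1 (sqInt_dd hμ.2.summable f), fun x hx => hchi ▸ hmean ⟨x, hx⟩⟩, ?_⟩, hchi.symm⟩
  intro x _ s
  simp

theorem IsHarmDecomp.unique (hμ : IsProb μ) (hnd : Nondeg μ) {ω u u' : Γ → Γ → ℝ} {f f' : Γ → ℝ}
    (hu : IsHarmDecomp R μ ω u f) (hu' : IsHarmDecomp R μ ω u' f') {x : Γ} (hx : x ∈ R.Δ)
    (s : Γ) : u x s = u' x s := by
  obtain ⟨-, ⟨hsq, hmean⟩, hωu⟩ := hu
  obtain ⟨-, ⟨hsq', hmean'⟩, hωu'⟩ := hu'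
  set h : R.Δ → ℝ := fun y => f' y - f y
  have hdiff : ∀ (y : R.Δ) (t : Γ), u y t - u' y t = h (R.act t y) - h y := fun y t => by
    have := (hωu y y.2 t).symm.trans (hωu' y y.2 t)
    rw [dd_coe, dd_coe] at this
    linarith
  have hlap : ∀ y, laplacian R μ h y = chi R μ u - chi R μ u' := fun y => by
    calc laplacian R μ h y = ∑' t, (μ t * u y t - μ t * u' y t) :=
          tsum_congr fun t => by rw [← mul_sub, hdiff]
      _ = chi R μ u - chi R μ u' := by
          rw [(hsq.summable_mul hμ y).tsum_sub (hsq'.summable_mul hμ y), hmean y y.2,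
            hmean' y y.2]
  have hconst := eq_of_laplacian_eq_zero hμ hnd
    (funext fun y => (hlap y).trans (eq_zero_of_forall_laplacian_eq hμ.2.summable hlap))
  have := hdiff ⟨x, hx⟩ s
  rw [hconst (R.act s _) ⟨x, hx⟩, sub_self] at this
  linarith

end HarmonicForms

theorem harmonic_decomposition_general
    {Γ : Type*} [Group Γ] {Λ : Subgroup Γ}
    (R : RepSystem Λ) (μ : Γ → ℝ) (hμ : IsProb μ) (hnd : Nondeg μ)
    (ω : Γ → Γ → ℝ) (hω : IsOneForm R ω) (hsq : SqInt R μ ω) :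
    (∃ (u : Γ → Γ → ℝ) (f : Γ → ℝ),
        IsHarmDecomp R μ ω u f ∧ chi R μ ω = chi R μ u) ∧
    (∀ (u u' : Γ → Γ → ℝ) (f f' : Γ → ℝ),
        IsHarmDecomp R μ ω u f → IsHarmDecomp R μ ω u' f' →
        ∀ x ∈ R.Δ, ∀ s : Γ, u x s = u' x s) :=
  ⟨exists_isHarmDecomp hμ hnd hω hsq, fun _ _ _ _ hu hu' _ hx s => hu.unique hμ hnd hu' hx s⟩

/-- Every square-integrable 1-form decomposes as `ω = u + df` with `u`
a harmonic 1-form; the harmonic part is unique, and `χ(ω) = χ(u)`. -/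
theorem harmonic_decomposition
    {Γ : Type*} [Group Γ] [Countable Γ] {Λ : Subgroup Γ} (hN : Λ.Normal)
    (hI : Λ.index ≠ 0) {m : ℕ} (hm : 1 ≤ m) (ψ : Λ ≃* Multiplicative (Fin m → ℤ))
    (R : RepSystem Λ) (μ : Γ → ℝ) (hμ : IsProb μ) (hnd : Nondeg μ)
    (ω : Γ → Γ → ℝ) (hω : IsOneForm R ω) (hsq : SqInt R μ ω) :
    (∃ (u : Γ → Γ → ℝ) (f : Γ → ℝ),
        IsHarmDecomp R μ ω u f ∧ chi R μ ω = chi R μ u) ∧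
    (∀ (u u' : Γ → Γ → ℝ) (f f' : Γ → ℝ),
        IsHarmDecomp R μ ω u f → IsHarmDecomp R μ ω u' f' →
        ∀ x ∈ R.Δ, ∀ s : Γ, u x s = u' x s) :=
  harmonic_decomposition_general R μ hμ hnd ω hω hsq

end NSVA
end

section
/- If the probability measure μ on Γ has finite second moment, then for every v ∈ ℝ^m: (i) the 1-form v̂ is square-integrable, i.e. ∑_{x∈Δ}∑_{s∈Γ} μ(s)·⟨v, α(x,s)⟩² < ∞; (ii) ∑_{x∈Δ}∑_{s∈Γ} μ(s)·‖α(x,s)‖ < ∞, so the drift ζ := (1/#F)·∑_{x∈Δ}∑_{s∈Γ} μ(s)·α(x,s) ∈ ℝ^m is well defined (absolutely convergent); and (iii) χ(v̂) = ⟨v, ζ⟩. -/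
/-!
Since `α(x, st) = α(x, s) + α(x^s, t)`, the cocycle grows at most linearly along words in the
generators: `‖α(x, s)‖ ≤ C |s|`. Hence `v̂(x, s)` and `‖α(x, s)‖` are `O(|s|)`, and as word lengths
are integers, `|s| ≤ |s|²`, so both the square of `v̂` and `‖α‖` are dominated by the second
moment of `μ`. Absolute convergence then lets the sum over `s` in `χ(v̂)` be exchanged with the
finite sum over coordinates, giving `⟨v, ζ⟩`.
-/

open scoped BigOperators Classical
open Filter Matrix MeasureTheory

namespace NSVA

section Cocycle

variable {Γ : Type*} [Group Γ] {Λ : Subgroup Γ} {m : ℕ}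
  (ψ : Λ ≃* Multiplicative (Fin m → ℤ)) (R : RepSystem Λ)

theorem RepSystem.rep_rep_mul_s7 (x s t : Γ) : R.rep (R.rep (x * s) * t) = R.rep (x * s * t) := by
  have h := R.rep_coset (R.rep (x * s) * t) _ (R.rep_spec (x * s))
  rwa [show x * s * (R.rep (x * s))⁻¹ * (R.rep (x * s) * t) = x * s * t by group, eq_comm] at h

theorem cocycle_mul (x s t : Γ) :
    cocycle ψ R x (s * t) = cocycle ψ R x s + cocycle ψ R (R.rep (x * s)) t := by
  have key : (⟨x * (s * t) * (R.rep (x * (s * t)))⁻¹, R.rep_spec _⟩ : Λ) =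
      ⟨x * s * (R.rep (x * s))⁻¹, R.rep_spec _⟩ *
      ⟨R.rep (x * s) * t * (R.rep (R.rep (x * s) * t))⁻¹, R.rep_spec _⟩ := by
    ext
    simp only [Subgroup.coe_mul]
    rw [R.rep_rep_mul_s7, ← mul_assoc x s t]
    group
  rw [cocycle, key, _root_.map_mul, toAdd_mul]
  rfl

theorem cocycle_one {x : Γ} (hx : x ∈ R.Δ) : cocycle ψ R x 1 = 0 := by
  have : (⟨x * 1 * (R.rep (x * 1))⁻¹, R.rep_spec _⟩ : Λ) = 1 := by
    ext
    simp [R.rep_idem x hx]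
  rw [cocycle, this, _root_.map_one]
  rfl

theorem norm_cocycle_list_prod_le {S : Set Γ} {C : ℝ}
    (hC : ∀ y ∈ R.Δ, ∀ g ∈ S, ‖cocycle ψ R y g‖ ≤ C) :
    ∀ l : List Γ, (∀ g ∈ l, g ∈ S) → ∀ x ∈ R.Δ, ‖cocycle ψ R x l.prod‖ ≤ C * l.length
  | [], _, x, hx => by simp [cocycle_one ψ R hx]
  | g :: l, hl, x, hx => by
    rw [List.prod_cons, cocycle_mul, List.length_cons, Nat.cast_succ, mul_add_one,
      add_comm (C * _)]
    exact (norm_add_le _ _).trans <| add_le_add (hC x hx g (hl g List.mem_cons_self))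
      (norm_cocycle_list_prod_le hC l (fun g' hg' => hl g' (List.mem_cons_of_mem g hg'))
        _ (R.rep_mem _))

end Cocycle

theorem exists_list_length_eq_wordLength {G : Type*} [Group G] {S₀ : Finset G}
    (hsym : ∀ s ∈ S₀, s⁻¹ ∈ S₀) (hgen : Subgroup.closure (S₀ : Set G) = ⊤) (g : G) :
    ∃ l : List G, (∀ s ∈ l, s ∈ S₀) ∧ l.length = wordLength S₀ g ∧ l.prod = g := by
  have hinv : (S₀ : Set G)⁻¹ ⊆ S₀ := fun y hy => by simpa using hsym _ hy
  have hg : g ∈ Submonoid.closure (S₀ : Set G) := by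
    rw [← Set.union_eq_self_of_subset_right hinv, ← Subgroup.closure_toSubmonoid, hgen]
    trivial
  obtain ⟨l, hl, hprod⟩ := Submonoid.exists_list_of_mem_closure hg
  obtain ⟨l', hl', hlen, hprod'⟩ := Nat.sInf_mem (show {n : ℕ | ∃ l' : List G,
    (∀ s ∈ l', s ∈ S₀) ∧ l'.length = n ∧ l'.prod = g}.Nonempty from ⟨_, l, hl, rfl, hprod⟩)
  exact ⟨l', hl', hlen, hprod'⟩

theorem exists_norm_cocycle_le_mul_wordLength {Γ : Type*} [Group Γ] {Λ : Subgroup Γ} {m : ℕ}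
    (ψ : Λ ≃* Multiplicative (Fin m → ℤ)) (R : RepSystem Λ) {S₀ : Finset Γ}
    (hsym : ∀ s ∈ S₀, s⁻¹ ∈ S₀) (hgen : Subgroup.closure (S₀ : Set Γ) = ⊤) :
    ∃ C : ℝ, ∀ x ∈ R.Δ, ∀ s : Γ, ‖cocycle ψ R x s‖ ≤ C * wordLength S₀ s := by
  refine ⟨∑ y ∈ R.Δ, ∑ g ∈ S₀, ‖cocycle ψ R y g‖, fun x hx s => ?_⟩
  have hC : ∀ y ∈ R.Δ, ∀ g ∈ (S₀ : Set Γ),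
      ‖cocycle ψ R y g‖ ≤ ∑ y ∈ R.Δ, ∑ g ∈ S₀, ‖cocycle ψ R y g‖ := fun y hy g hg =>
    (Finset.single_le_sum (fun _ _ => norm_nonneg _) (Finset.mem_coe.mp hg)).trans
      (Finset.single_le_sum (f := fun y => ∑ g ∈ S₀, ‖cocycle ψ R y g‖)
        (fun _ _ => Finset.sum_nonneg fun _ _ => norm_nonneg _) hy)
  obtain ⟨l, hl, hlen, rfl⟩ := exists_list_length_eq_wordLength hsym hgen s
  rw [← hlen]
  exact norm_cocycle_list_prod_le ψ R hC l hl x hx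

section IntegerVectors

variable {ι : Type*} [Fintype ι]

theorem abs_intCast_le_norm (a : ι → ℤ) (i : ι) : |(a i : ℝ)| ≤ ‖a‖ :=
  (Int.norm_eq_abs (a i)).symm.trans_le (norm_le_pi_norm a i)

theorem abs_sum_mul_intCast_le (v : ι → ℝ) (a : ι → ℤ) :
    |∑ i, v i * (a i : ℝ)| ≤ (∑ i, |v i|) * ‖a‖ := by
  rw [Finset.sum_mul]
  refine (Finset.abs_sum_le_sum_abs _ _).trans (Finset.sum_le_sum fun i _ => ?_)
  rw [abs_mul]
  exact mul_le_mul_of_nonneg_left (abs_intCast_le_norm a i) (abs_nonneg _)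

theorem sqrt_sum_sq_intCast_le (a : ι → ℤ) :
    √(∑ i, (a i : ℝ) ^ 2) ≤ √(Fintype.card ι) * ‖a‖ := by
  calc √(∑ i, (a i : ℝ) ^ 2) ≤ √(∑ _i : ι, ‖a‖ ^ 2) :=
        Real.sqrt_le_sqrt <| Finset.sum_le_sum fun i _ => by
          rw [← sq_abs]
          exact pow_le_pow_left₀ (abs_nonneg _) (abs_intCast_le_norm a i) 2
    _ = √(Fintype.card ι) * ‖a‖ := by
        rw [Finset.sum_const, Finset.card_univ, nsmul_eq_mul,
          Real.sqrt_mul (Nat.cast_nonneg _), Real.sqrt_sq (norm_nonneg a)]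

end IntegerVectors

section Moments

variable {ι : Type*} {μ f : ι → ℝ} {W : ι → ℕ} {C : ℝ}

theorem summable_mul_sq_of_abs_le (hμ : ∀ s, 0 ≤ μ s)
    (hW : Summable fun s => (W s : ℝ) ^ 2 * μ s) (hf : ∀ s, |f s| ≤ C * W s) :
    Summable fun s => μ s * f s ^ 2 := by
  refine (hW.mul_left (C ^ 2)).of_nonneg_of_le (fun s => mul_nonneg (hμ s) (sq_nonneg _))
    fun s => ?_
  calc μ s * f s ^ 2 = μ s * |f s| ^ 2 := by rw [sq_abs]
    _ ≤ μ s * (C * W s) ^ 2 :=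
        mul_le_mul_of_nonneg_left (pow_le_pow_left₀ (abs_nonneg _) (hf s) 2) (hμ s)
    _ = C ^ 2 * ((W s : ℝ) ^ 2 * μ s) := by ring

theorem summable_mul_of_abs_le (hμ : ∀ s, 0 ≤ μ s)
    (hW : Summable fun s => (W s : ℝ) ^ 2 * μ s) (hf : ∀ s, |f s| ≤ C * W s) :
    Summable fun s => μ s * f s := by
  refine Summable.of_norm_bounded (hW.mul_left |C|) fun s => ?_
  have hWsq : (W s : ℝ) ≤ (W s : ℝ) ^ 2 := by exact_mod_cast Nat.le_self_pow two_ne_zero (W s)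
  calc ‖μ s * f s‖ = μ s * |f s| := by rw [Real.norm_eq_abs, abs_mul, abs_of_nonneg (hμ s)]
    _ ≤ μ s * (|C| * (W s : ℝ) ^ 2) := mul_le_mul_of_nonneg_left ((hf s).trans <|
        (mul_le_mul_of_nonneg_right (le_abs_self C) (Nat.cast_nonneg _)).trans
          (mul_le_mul_of_nonneg_left hWsq (abs_nonneg C))) (hμ s)
    _ = |C| * ((W s : ℝ) ^ 2 * μ s) := by ring

end Moments

theorem chi_vhat_eq_sum_mul_drift {Γ : Type*} [Group Γ] {Λ : Subgroup Γ} {m : ℕ}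
    (ψ : Λ ≃* Multiplicative (Fin m → ℤ)) (R : RepSystem Λ) (μ : Γ → ℝ) (v : Fin m → ℝ)
    (hsum : ∀ x ∈ R.Δ, ∀ i, Summable fun s => μ s * (cocycle ψ R x s i : ℝ)) :
    chi R μ (vhat ψ R v) = ∑ i, v i * drift ψ R μ i := by
  simp only [chi, vhat, drift, Finset.mul_sum]
  rw [Finset.sum_comm]
  refine Finset.sum_congr rfl fun x hx => ?_
  simp only [← tsum_mul_left]
  rw [← Summable.tsum_finsetSum fun i _ => ((hsum x hx i).mul_left _).mul_left _]
  exact tsum_congr fun s => Finset.sum_congr rfl fun i _ => by ring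

theorem vhat_sq_int_and_drift_general
    {Γ : Type*} [Group Γ] {Λ : Subgroup Γ}
    {m : ℕ} (ψ : Λ ≃* Multiplicative (Fin m → ℤ))
    (R : RepSystem Λ) (μ : Γ → ℝ) (hμ : IsProb μ) (hmom : FinSecondMoment μ)
    (v : Fin m → ℝ) :
    SqInt R μ (vhat ψ R v) ∧
    (∀ x ∈ R.Δ, Summable (fun s : Γ =>
        μ s * Real.sqrt (∑ i, ((cocycle ψ R x s i : ℝ)) ^ 2))) ∧
    chi R μ (vhat ψ R v) = ∑ i, v i * drift ψ R μ i := by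
  obtain ⟨S₀, hsym, hgen, hmom⟩ := hmom
  obtain ⟨C, hC⟩ := exists_norm_cocycle_le_mul_wordLength ψ R hsym hgen
  have hscaled : ∀ K, 0 ≤ K → ∀ x ∈ R.Δ, ∀ s, K * ‖cocycle ψ R x s‖ ≤ K * C * wordLength S₀ s :=
    fun K hK x hx s => (mul_le_mul_of_nonneg_left (hC x hx s) hK).trans_eq (mul_assoc ..).symm
  refine ⟨fun x hx => ?_, fun x hx => ?_, ?_⟩
  · have := summable_mul_sq_of_abs_le hμ.1 hmom fun s =>
      (abs_sum_mul_intCast_le v _).trans (hscaled _ (by positivity) x hx s)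
    simpa only [vhat, div_mul_eq_mul_div] using this.div_const (Λ.index : ℝ)
  · refine summable_mul_of_abs_le (C := √(Fintype.card (Fin m)) * C) hμ.1 hmom fun s => ?_
    rw [abs_of_nonneg (Real.sqrt_nonneg _)]
    exact (sqrt_sum_sq_intCast_le _).trans (hscaled _ (Real.sqrt_nonneg _) x hx s)
  · exact chi_vhat_eq_sum_mul_drift ψ R μ v fun x hx i =>
      summable_mul_of_abs_le hμ.1 hmom fun s => (abs_intCast_le_norm _ i).trans (hC x hx s)

/-- If `μ` has finite second moment then `v̂` is square-integrable, the
drift `ζ` is well defined (absolutely convergent), and `χ(v̂) = ⟨v, ζ⟩`. -/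
theorem vhat_sq_int_and_drift
    {Γ : Type*} [Group Γ] [Countable Γ] {Λ : Subgroup Γ} (hN : Λ.Normal)
    (hI : Λ.index ≠ 0) {m : ℕ} (hm : 1 ≤ m) (ψ : Λ ≃* Multiplicative (Fin m → ℤ))
    (R : RepSystem Λ) (μ : Γ → ℝ) (hμ : IsProb μ) (hmom : FinSecondMoment μ)
    (v : Fin m → ℝ) :
    SqInt R μ (vhat ψ R v) ∧
    (∀ x ∈ R.Δ, Summable (fun s : Γ =>
        μ s * Real.sqrt (∑ i, ((cocycle ψ R x s i : ℝ)) ^ 2))) ∧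
    chi R μ (vhat ψ R v) = ∑ i, v i * drift ψ R μ i :=
  vhat_sq_int_and_drift_general ψ R μ hμ hmom v

end NSVA
end
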